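/- arXiv:1212.2247 — 2 statements merged into one kernel-verified Lean document; each statement's English description precedes it below -/
import Mathlib

section
/- Assume hypotheses (H1) and (H2), and assume in addition that X is a linear subspace of L¹([0,1], Lebesgue) with ‖f‖_{L¹} ≤ C₁‖f‖ for all f ∈ X and some constant C₁ > 0, and that for every k ∈ ℕ and ℙ-a.e. ω, the operator 𝓛_{k,ω} maps nonnegative functions to nonnegative functions and satisfies ∫ 𝓛_{k,ω} f dm = ∫ f dm for all f ∈ X (m = Lebesgue measure). Then for every k ∈ ℕ and every f ∈ X with ∫ f dm ≠ 0, for ℙ-a.e. ω, lim_{n→∞} (1/n) log ‖𝓛_{k,ω}^{(n)} f‖ = 0; consequently lim_{n→∞} (1/n) log ‖𝓛_{k,ω}^{(n)}‖_{op} = 0 for ℙ-a.e. ω, where ‖·‖_{op} denotes the operator norm induced by the strong norm. -/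
/-!
The integral `∫ 𝓛^{(n)} f dm = ∫ f dm ≠ 0` is preserved and is dominated by `C₁ ‖𝓛^{(n)} f‖`, so
the norms stay bounded away from `0`. For the upper bound, combining (H1) with (H2) gives the
recursion `‖𝓛^{(n+1)}‖ ≤ α(σⁿω) ‖𝓛^{(n)}‖ + B C₀ C(σⁿω)`, which unwinds to a sum of terms
`C(σʲω) exp(S_n - S_{j+1})` with `S_n` the Birkhoff sums of `log α`. Since `∫ log α < 0`, the
maximal ergodic theorem makes the increments `S_n - S_m` (`m ≤ n`) at most `εn + K`, and
temperedness makes `C(σʲω) ≤ D e^{εj}`; hence `‖𝓛^{(n)}‖` grows subexponentially.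
-/

open MeasureTheory Filter

/-- A function `f : Ω → ℝ` is *tempered* with respect to the invertible
transformation `σ` if for `ℙ`-a.e. `ω`, `(1/|n|) * log |f(σⁿ ω)| → 0` as `n → ±∞`. -/
def Tempered {Ω : Type*} [MeasurableSpace Ω] (ℙ : Measure Ω) (σ : Equiv.Perm Ω)
    (f : Ω → ℝ) : Prop :=
  ∀ᵐ ω ∂ℙ, Tendsto (fun n : ℤ => (1 / |(n : ℝ)|) * Real.log |f ((σ ^ n) ω)|)
    cofinite (nhds 0)

/-- The iterated cocycle `𝓛_ω^{(n)} = 𝓛_{σ^{n-1} ω} ∘ ⋯ ∘ 𝓛_{σ ω} ∘ 𝓛_ω`. -/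
noncomputable def iterOp {Ω X : Type*} [NormedAddCommGroup X] [NormedSpace ℝ X]
    (σ : Equiv.Perm Ω) (L : Ω → X →L[ℝ] X) (ω : Ω) : ℕ → (X →L[ℝ] X)
  | 0 => ContinuousLinearMap.id ℝ X
  | n + 1 => (L ((σ ^ n) ω)).comp (iterOp σ L ω n)

open Set Finset

section Birkhoff

variable {Ω : Type*} {T : Ω → Ω} {g : Ω → ℝ}

noncomputable def birkhoffMax (T : Ω → Ω) (g : Ω → ℝ) (N : ℕ) (ω : Ω) : ℝ :=
  partialSups (fun n => birkhoffSum T g n ω) N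

lemma birkhoffSum_le_birkhoffMax {n N : ℕ} (h : n ≤ N) (ω : Ω) :
    birkhoffSum T g n ω ≤ birkhoffMax T g N ω :=
  le_partialSups_of_le (fun n => birkhoffSum T g n ω) h

lemma birkhoffMax_nonneg (N : ℕ) (ω : Ω) : 0 ≤ birkhoffMax T g N ω := by
  simpa using birkhoffSum_le_birkhoffMax (T := T) (g := g) N.zero_le ω

lemma monotone_birkhoffMax (ω : Ω) : Monotone fun N => birkhoffMax T g N ω :=
  partialSups_monotone _

lemma birkhoffMax_le_max_add_comp (N : ℕ) (ω : Ω) :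
    birkhoffMax T g N ω ≤ max 0 (g ω + birkhoffMax T g N (T ω)) := by
  refine partialSups_le _ _ _ fun n hn => ?_
  cases n with
  | zero => simp
  | succ m =>
    rw [birkhoffSum_succ']
    exact le_max_of_le_right (add_le_add_right (birkhoffSum_le_birkhoffMax (by omega) _) _)

lemma birkhoffMax_zero : birkhoffMax T g 0 = 0 := by
  ext ω
  simp [birkhoffMax]

lemma birkhoffMax_succ (N : ℕ) :
    birkhoffMax T g (N + 1) = birkhoffMax T g N ⊔ birkhoffSum T g (N + 1) :=
  funext fun ω => partialSups_succ (fun n => birkhoffSum T g n ω) N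

lemma bddAbove_birkhoffSum_comp_iff (ω : Ω) :
    BddAbove (range fun n => birkhoffSum T g n (T ω)) ↔
      BddAbove (range fun n => birkhoffSum T g n ω) := by
  constructor
  · rintro ⟨K, hK⟩
    refine ⟨max 0 (g ω + K), ?_⟩
    rintro _ ⟨n, rfl⟩
    cases n with
    | zero => simp
    | succ m =>
      change birkhoffSum T g (m + 1) ω ≤ _
      rw [birkhoffSum_succ']
      exact le_max_of_le_right (add_le_add_right (hK ⟨m, rfl⟩) _)
  · rintro ⟨K, hK⟩
    refine ⟨K - g ω, ?_⟩
    rintro _ ⟨n, rfl⟩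
    have : birkhoffSum T g (n + 1) ω ≤ K := hK ⟨n + 1, rfl⟩
    rw [birkhoffSum_succ'] at this
    change birkhoffSum T g n (T ω) ≤ K - g ω
    linarith

variable [MeasurableSpace Ω] {μ : Measure Ω}

lemma MeasureTheory.MeasurePreserving.ae_forall_iterate (hT : MeasurePreserving T μ μ)
    {P : Ω → Prop} (hP : ∀ᵐ ω ∂μ, P ω) : ∀ᵐ ω ∂μ, ∀ n : ℕ, P (T^[n] ω) :=
  ae_all_iff.2 fun n => (hT.iterate n).quasiMeasurePreserving.ae hP

lemma measurable_birkhoffSum (hT : Measurable T) (hg : Measurable g) (n : ℕ) :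
    Measurable (birkhoffSum T g n) :=
  Finset.measurable_sum _ fun i _ => hg.comp (hT.iterate i)

lemma integrable_birkhoffSum (hT : MeasurePreserving T μ μ) (hg : Integrable g μ) (n : ℕ) :
    Integrable (birkhoffSum T g n) μ := by
  unfold birkhoffSum
  exact integrable_finsetSum _ fun i _ => (hT.iterate i).integrable_comp_of_integrable hg

lemma measurable_birkhoffMax (hT : Measurable T) (hg : Measurable g) (N : ℕ) :
    Measurable (birkhoffMax T g N) := by
  induction N with
  | zero => rw [birkhoffMax_zero]; exact measurable_zero
  | succ N ih => simpa only [birkhoffMax_succ] using ih.sup (measurable_birkhoffSum hT hg _)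

lemma integrable_birkhoffMax (hT : MeasurePreserving T μ μ) (hg : Integrable g μ) (N : ℕ) :
    Integrable (birkhoffMax T g N) μ := by
  induction N with
  | zero => simpa only [birkhoffMax_zero] using integrable_zero Ω ℝ μ
  | succ N ih => simpa only [birkhoffMax_succ] using ih.sup (integrable_birkhoffSum hT hg _)

/-- Garsia's form of the maximal inequality. -/
lemma setIntegral_pos_nonneg_of_le_add_comp (hT : MeasurePreserving T μ μ) {M : Ω → ℝ}
    (hMm : Measurable M) (hMi : Integrable M μ) (hM0 : 0 ≤ M) (hg : Integrable g μ)
    (hMg : ∀ ω, 0 < M ω → M ω ≤ g ω + M (T ω)) :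
    0 ≤ ∫ ω in {ω | 0 < M ω}, g ω ∂μ := by
  set A := {ω | 0 < M ω}
  have hA : MeasurableSet A := measurableSet_lt measurable_const hMm
  have hMTi : Integrable (M ∘ T) μ := hT.integrable_comp_of_integrable hMi
  have hMA : ∫ ω in A, M ω ∂μ = ∫ ω, M ω ∂μ :=
    setIntegral_eq_integral_of_forall_compl_eq_zero fun ω hω => le_antisymm (not_lt.1 hω) (hM0 ω)
  have hMTA : ∫ ω in A, M (T ω) ∂μ ≤ ∫ ω, M (T ω) ∂μ :=
    setIntegral_le_integral hMTi (Eventually.of_forall fun ω => hM0 (T ω))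
  have hMT : ∫ ω, M (T ω) ∂μ = ∫ ω, M ω ∂μ := by
    rw [← integral_map hT.measurable.aemeasurable hMm.aestronglyMeasurable, hT.map_eq]
  calc 0 = ∫ ω in A, M ω ∂μ - ∫ ω, M (T ω) ∂μ := by rw [hMA, hMT, sub_self]
    _ ≤ ∫ ω in A, M ω ∂μ - ∫ ω in A, M (T ω) ∂μ := by linarith
    _ = ∫ ω in A, (M ω - M (T ω)) ∂μ := (integral_sub hMi.integrableOn hMTi.integrableOn).symm
    _ ≤ ∫ ω in A, g ω ∂μ :=
      setIntegral_mono_on (hMi.sub hMTi).integrableOn hg.integrableOn hA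
        fun ω hω => by linarith [hMg ω hω]

lemma setIntegral_exists_birkhoffSum_pos_nonneg (hT : MeasurePreserving T μ μ)
    (hgm : Measurable g) (hg : Integrable g μ) :
    0 ≤ ∫ ω in {ω | ∃ n, 0 < birkhoffSum T g n ω}, g ω ∂μ := by
  have hU : {ω | ∃ n, 0 < birkhoffSum T g n ω} = ⋃ N, {ω | 0 < birkhoffMax T g N ω} := by
    ext ω
    simp only [mem_iUnion, mem_ofPred_eq]
    refine ⟨fun ⟨n, hn⟩ => ⟨n, hn.trans_le (birkhoffSum_le_birkhoffMax le_rfl ω)⟩,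
      fun ⟨N, hN⟩ => ?_⟩
    by_contra! h
    exact hN.not_ge (partialSups_le _ _ _ fun n _ => h n)
  have hmeas : ∀ N, MeasurableSet {ω | 0 < birkhoffMax T g N ω} := fun N =>
    measurableSet_lt measurable_const (measurable_birkhoffMax hT.measurable hgm N)
  have hmono : Monotone fun N => {ω | 0 < birkhoffMax T g N ω} := fun N N' h ω hω =>
    lt_of_lt_of_le hω (monotone_birkhoffMax ω h)
  rw [hU]
  refine ge_of_tendsto' (tendsto_setIntegral_of_monotone hmeas hmono hg.integrableOn) fun N => ?_
  refine setIntegral_pos_nonneg_of_le_add_comp hT (measurable_birkhoffMax hT.measurable hgm N)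
    (integrable_birkhoffMax hT hg N) (birkhoffMax_nonneg N) hg fun ω hω => ?_
  exact (le_max_iff.1 (birkhoffMax_le_max_add_comp N ω)).resolve_left hω.not_ge

lemma Ergodic.ae_bddAbove_birkhoffSum [IsProbabilityMeasure μ] (herg : Ergodic T μ)
    (hgm : Measurable g) (hg : Integrable g μ) (hneg : ∫ ω, g ω ∂μ < 0) :
    ∀ᵐ ω ∂μ, BddAbove (range fun n => birkhoffSum T g n ω) := by
  have hE : MeasurableSet {ω | BddAbove (range fun n => birkhoffSum T g n ω)} :=
    measurableSet_bddAbove_range (measurable_birkhoffSum herg.measurable hgm)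
  have hTE : T ⁻¹' {ω | BddAbove (range fun n => birkhoffSum T g n ω)} =
      {ω | BddAbove (range fun n => birkhoffSum T g n ω)} :=
    ext bddAbove_birkhoffSum_comp_iff
  refine (herg.ae_mem_or_ae_notMem hE hTE).resolve_right fun hnot => ?_
  have hpos : ∀ᵐ ω ∂μ, ω ∈ {ω | ∃ n, 0 < birkhoffSum T g n ω} :=
    hnot.mono fun ω hω => by simpa using not_bddAbove_iff.1 hω 0
  have := setIntegral_exists_birkhoffSum_pos_nonneg herg.toMeasurePreserving hgm hg
  rw [Measure.restrict_eq_self_of_ae_mem hpos] at this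
  linarith

lemma Ergodic.ae_bddAbove_birkhoffSum_sub_mul [IsProbabilityMeasure μ] (herg : Ergodic T μ)
    (hgm : Measurable g) (hg : Integrable g μ) {c : ℝ} (hc : ∫ ω, g ω ∂μ < c) :
    ∀ᵐ ω ∂μ, BddAbove (range fun n : ℕ => birkhoffSum T g n ω - n * c) := by
  have hneg : ∫ ω, (g ω - c) ∂μ < 0 := by
    rw [integral_sub hg (integrable_const c)]
    simpa using hc
  filter_upwards [herg.ae_bddAbove_birkhoffSum (hgm.sub measurable_const)
    (hg.sub (integrable_const c)) hneg] with ω hω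
  have hconst : ∀ n : ℕ, birkhoffSum T (fun _ => c) n ω = n * c := fun n => by
    rw [birkhoffSum_of_comp_eq rfl, Pi.smul_apply, nsmul_eq_mul]
  simpa only [birkhoffSum_sub, hconst] using hω

lemma Ergodic.ae_bddAbove_mul_sub_birkhoffSum [IsProbabilityMeasure μ] (herg : Ergodic T μ)
    (hgm : Measurable g) (hg : Integrable g μ) {c : ℝ} (hc : c < ∫ ω, g ω ∂μ) :
    ∀ᵐ ω ∂μ, BddAbove (range fun n : ℕ => n * c - birkhoffSum T g n ω) := by
  have hc' : ∫ ω, -g ω ∂μ < -c := by rw [integral_neg]; linarith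
  filter_upwards [herg.ae_bddAbove_birkhoffSum_sub_mul hgm.neg hg.neg hc'] with ω hω
  convert hω using 3 with n
  simp only [birkhoffSum_neg]
  ring

lemma Ergodic.ae_birkhoffSum_sub_birkhoffSum_le [IsProbabilityMeasure μ] (herg : Ergodic T μ)
    (hgm : Measurable g) (hg : Integrable g μ) (hg0 : ∫ ω, g ω ∂μ ≤ 0) :
    ∀ᵐ ω ∂μ, ∀ ε > 0, ∃ K, ∀ m n : ℕ, m ≤ n →
      birkhoffSum T g n ω - birkhoffSum T g m ω ≤ ε * n + K := by
  set mean := ∫ ω, g ω ∂μ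
  have hδ0 : ∀ j : ℕ, (0 : ℝ) < 1 / (j + 1) := fun j => Nat.one_div_pos_of_nat
  have hδ : ∀ j : ℕ, ∀ᵐ ω ∂μ,
      BddAbove (range fun n : ℕ => birkhoffSum T g n ω - n * (mean + 1 / (j + 1))) ∧
      BddAbove (range fun n : ℕ => n * (mean - 1 / (j + 1)) - birkhoffSum T g n ω) := fun j =>
    (herg.ae_bddAbove_birkhoffSum_sub_mul hgm hg (by linarith [hδ0 j])).and
      (herg.ae_bddAbove_mul_sub_birkhoffSum hgm hg (by linarith [hδ0 j]))
  filter_upwards [ae_all_iff.2 hδ] with ω hω ε hε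
  obtain ⟨j, hj⟩ := exists_nat_one_div_lt (half_pos hε)
  obtain ⟨⟨K₁, hK₁⟩, ⟨K₂, hK₂⟩⟩ := hω j
  refine ⟨K₁ + K₂, fun m n hmn => ?_⟩
  have hn := hK₁ ⟨n, rfl⟩
  have hm := hK₂ ⟨m, rfl⟩
  simp only at hn hm
  have hmn' : (m : ℝ) ≤ n := by exact_mod_cast hmn
  nlinarith [mul_nonpos_of_nonpos_of_nonneg hg0 (sub_nonneg.2 hmn'),
    mul_le_mul_of_nonneg_left hmn' (hδ0 j).le, mul_le_mul_of_nonneg_right hj.le (Nat.cast_nonneg n)]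

end Birkhoff

/-- Discrete variation of constants. -/
lemma le_exp_sub_mul_add_sum_of_le {a β S : ℕ → ℝ}
    (h : ∀ n, a (n + 1) ≤ Real.exp (S (n + 1) - S n) * a n + β n) (n : ℕ) :
    a n ≤ Real.exp (S n - S 0) * a 0 + ∑ j ∈ range n, β j * Real.exp (S n - S (j + 1)) := by
  induction n with
  | zero => simp
  | succ n ih =>
    calc a (n + 1) ≤ Real.exp (S (n + 1) - S n) * a n + β n := h n
      _ ≤ Real.exp (S (n + 1) - S n) * (Real.exp (S n - S 0) * a 0
            + ∑ j ∈ range n, β j * Real.exp (S n - S (j + 1))) + β n := by gcongr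
      _ = _ := by
        simp only [sum_range_succ, mul_add, mul_sum, Real.exp_sub]
        field_simp
        ring

def SubexpBounded (a : ℕ → ℝ) : Prop :=
  ∀ ε > 0, ∃ D, ∀ n, a n ≤ D * Real.exp (ε * n)

namespace SubexpBounded

variable {a b : ℕ → ℝ}

lemma mono (hb : SubexpBounded b) (hab : ∀ n, a n ≤ b n) : SubexpBounded a := fun ε hε =>
  let ⟨D, hD⟩ := hb ε hε
  ⟨D, fun n => (hab n).trans (hD n)⟩

lemma mul_const (ha : SubexpBounded a) {c : ℝ} (hc : 0 ≤ c) :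
    SubexpBounded fun n => a n * c := fun ε hε => by
  obtain ⟨D, hD⟩ := ha ε hε
  exact ⟨D * c, fun n => by nlinarith [hD n, Real.exp_pos (ε * n)]⟩

lemma of_tendsto_log_div
    (ha : Tendsto (fun n : ℕ => (1 / (n : ℝ)) * Real.log (a n)) atTop (nhds 0)) :
    SubexpBounded a := by
  intro ε hε
  obtain ⟨N, hN⟩ := eventually_atTop.1
    ((ha.eventually (gt_mem_nhds hε)).and (eventually_gt_atTop 0))
  refine ⟨1 + ∑ k ∈ range N, |a k|, fun n => ?_⟩
  have hsum : 0 ≤ ∑ k ∈ range N, |a k| := sum_nonneg fun k _ => abs_nonneg _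
  rcases lt_or_ge n N with hn | hn
  · have hak : a n ≤ ∑ k ∈ range N, |a k| :=
      (le_abs_self _).trans (single_le_sum (fun k _ => abs_nonneg (a k)) (mem_range.2 hn))
    nlinarith [Real.one_le_exp (by positivity : 0 ≤ ε * n)]
  · obtain ⟨hlog, hn0⟩ := hN n hn
    have hn0' : (0 : ℝ) < n := by exact_mod_cast hn0
    have : Real.log (a n) < ε * n := by
      rwa [one_div_mul_eq_div, div_lt_iff₀ hn0'] at hlog
    calc a n ≤ Real.exp (Real.log (a n)) := Real.le_exp_log _
      _ ≤ Real.exp (ε * n) := Real.exp_le_exp.2 this.le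
      _ ≤ _ := le_mul_of_one_le_left (Real.exp_pos _).le (by linarith)

lemma tendsto_log_div {c : ℝ} (ha : SubexpBounded a) (hc : 0 < c) (hca : ∀ n, c ≤ a n) :
    Tendsto (fun n : ℕ => (1 / (n : ℝ)) * Real.log (a n)) atTop (nhds 0) := by
  have hpos : ∀ n, 0 < a n := fun n => hc.trans_le (hca n)
  refine tendsto_order.2 ⟨fun b hb => ?_, fun b hb => ?_⟩
  · filter_upwards [(tendsto_const_div_atTop_nhds_zero_nat (Real.log c)).eventually
      (lt_mem_nhds hb)] with n hn
    rw [one_div_mul_eq_div]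
    exact hn.trans_le (div_le_div_of_nonneg_right (Real.log_le_log hc (hca n)) n.cast_nonneg)
  · obtain ⟨D, hD⟩ := ha (b / 2) (half_pos hb)
    have hD0 : 0 < D := pos_of_mul_pos_left ((hpos 0).trans_le (hD 0)) (Real.exp_pos _).le
    filter_upwards [(tendsto_const_div_atTop_nhds_zero_nat (Real.log D)).eventually
      (gt_mem_nhds (half_pos hb)), eventually_gt_atTop 0] with n hn hn0
    have hn0' : (0 : ℝ) < n := by exact_mod_cast hn0
    have hlog : Real.log (a n) ≤ Real.log D + b / 2 * n := by
      calc Real.log (a n) ≤ Real.log (D * Real.exp (b / 2 * n)) := Real.log_le_log (hpos n) (hD n)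
        _ = _ := by rw [Real.log_mul hD0.ne' (Real.exp_pos _).ne', Real.log_exp]
    calc 1 / (n : ℝ) * Real.log (a n) ≤ Real.log D / n + b / 2 := by
          rw [one_div_mul_eq_div, div_add' _ _ _ hn0'.ne']
          exact div_le_div_of_nonneg_right (by linarith) hn0'.le
      _ < b := by linarith

lemma of_le_exp_sub_mul_add {β S : ℕ → ℝ}
    (h : ∀ n, a (n + 1) ≤ Real.exp (S (n + 1) - S n) * a n + β n)
    (hβ0 : ∀ n, 0 ≤ β n) (hβ : SubexpBounded β)
    (hS : ∀ ε > 0, ∃ K, ∀ m n : ℕ, m ≤ n → S n - S m ≤ ε * n + K) : SubexpBounded a := by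
  intro ε hε
  set δ := ε / 3 with hδ
  have hδ0 : 0 < δ := by positivity
  obtain ⟨K, hK⟩ := hS δ hδ0
  obtain ⟨D, hD⟩ := hβ δ hδ0
  have hD0 : 0 ≤ D := by simpa using (hβ0 0).trans (hD 0)
  refine ⟨Real.exp K * (|a 0| + D / δ), fun n => ?_⟩
  have hE1 : 1 ≤ Real.exp (δ * n) := Real.one_le_exp (by positivity)
  have hlin : δ * n ≤ Real.exp (δ * n) := by linarith [Real.add_one_le_exp (δ * n)]
  have hεE : Real.exp (ε * n) = Real.exp (δ * n) ^ 3 := by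
    rw [← Real.exp_nat_mul, hδ]; ring_nf
  set E := Real.exp (δ * n)
  have hincr : ∀ m ≤ n, Real.exp (S n - S m) ≤ Real.exp K * E := fun m hm => by
    rw [← Real.exp_add, add_comm]; exact Real.exp_le_exp.2 (hK m n hm)
  have hterm : ∀ j ∈ range n, β j * Real.exp (S n - S (j + 1)) ≤ D * Real.exp K * E ^ 2 := by
    intro j hj
    have hjn : (j : ℝ) ≤ n := by exact_mod_cast (mem_range.1 hj).le
    have hβj : β j ≤ D * E :=
      (hD j).trans (mul_le_mul_of_nonneg_left (Real.exp_le_exp.2 (by gcongr)) hD0)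
    calc β j * Real.exp (S n - S (j + 1)) ≤ (D * E) * (Real.exp K * E) :=
          mul_le_mul hβj (hincr _ (mem_range.1 hj)) (Real.exp_pos _).le (by positivity)
      _ = _ := by ring
  have hn : (n : ℝ) ≤ E / δ := by
    rw [le_div_iff₀ hδ0]; linarith
  have hsum : ∑ j ∈ range n, β j * Real.exp (S n - S (j + 1)) ≤ D / δ * Real.exp K * E ^ 3 :=
    calc _ ≤ n * (D * Real.exp K * E ^ 2) := by simpa using sum_le_sum hterm
      _ ≤ E / δ * (D * Real.exp K * E ^ 2) := by gcongr
      _ = _ := by ring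
  have hfirst : Real.exp (S n - S 0) * a 0 ≤ |a 0| * Real.exp K * E ^ 3 :=
    calc _ ≤ Real.exp (S n - S 0) * |a 0| := by gcongr; exact le_abs_self _
      _ ≤ Real.exp K * E * |a 0| := by gcongr; exact hincr 0 n.zero_le
      _ = |a 0| * Real.exp K * E := by ring
      _ ≤ |a 0| * Real.exp K * E ^ 3 := by gcongr; exact le_self_pow₀ hE1 (by norm_num)
  rw [hεE]
  linarith [le_exp_sub_mul_add_sum_of_le h n]

end SubexpBounded

lemma Tempered.ae_tendsto_log_div {Ω : Type*} [MeasurableSpace Ω] {ℙ : Measure Ω}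
    {σ : Equiv.Perm Ω} {f : Ω → ℝ} (hf : Tempered ℙ σ f) :
    ∀ᵐ ω ∂ℙ, Tendsto (fun n : ℕ => (1 / (n : ℝ)) * Real.log |f ((σ ^ n) ω)|) atTop (nhds 0) :=
  hf.mono fun ω hω => by
    have := hω.comp (Nat.cast_injective (R := ℤ)).tendsto_cofinite
    rw [Nat.cofinite_eq_atTop] at this
    simpa [Function.comp_def] using this

lemma ContinuousLinearMap.opNorm_comp_le_mul_add {𝕜 E F G : Type*} [NontriviallyNormedField 𝕜]
    [SeminormedAddCommGroup E] [SeminormedAddCommGroup F] [SeminormedAddCommGroup G]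
    [NormedSpace 𝕜 E] [NormedSpace 𝕜 F] [NormedSpace 𝕜 G] {S : F →L[𝕜] G} {T : E →L[𝕜] F}
    (w : F → ℝ) {a b c : ℝ} (ha : 0 ≤ a) (hb : 0 ≤ b) (hc : 0 ≤ c)
    (hS : ∀ y, ‖S y‖ ≤ a * ‖y‖ + b * w y) (hT : ∀ x, w (T x) ≤ c * ‖x‖) :
    ‖S.comp T‖ ≤ a * ‖T‖ + b * c :=
  opNorm_le_bound _ (by positivity) fun x =>
    calc ‖S (T x)‖ ≤ a * ‖T x‖ + b * w (T x) := hS _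
      _ ≤ a * (‖T‖ * ‖x‖) + b * (c * ‖x‖) := by gcongr; exacts [T.le_opNorm x, hT x]
      _ = _ := by ring

section iterOp

variable {Ω X : Type*} [NormedAddCommGroup X] [NormedSpace ℝ X] {σ : Equiv.Perm Ω}
  {L : Ω → X →L[ℝ] X} {ω : Ω}

lemma apply_iterOp_of_forall_apply_eq {β : Type*} {Φ : X → β}
    (h : ∀ (n : ℕ) x, Φ (L ((σ ^ n) ω) x) = Φ x) (n : ℕ) (x : X) :
    Φ (iterOp σ L ω n x) = Φ x := by
  induction n with
  | zero => rfl
  | succ n ih => exact (h n _).trans ih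

lemma norm_iterOp_succ_le (wn : X → ℝ) {α C : Ω → ℝ} {B C₀ : ℝ} (hB : 0 ≤ B) (hC₀ : 0 ≤ C₀)
    (hwn : ∀ x, wn x ≤ C₀ * ‖x‖) (n : ℕ) (hα : 0 < α ((σ ^ n) ω)) (hC : 0 ≤ C ((σ ^ n) ω))
    (hLY : ∀ x, ‖L ((σ ^ n) ω) x‖ ≤ α ((σ ^ n) ω) * ‖x‖ + B * wn x)
    (hW : ∀ x, wn (iterOp σ L ω n x) ≤ C ((σ ^ n) ω) * wn x) :
    ‖iterOp σ L ω (n + 1)‖ ≤ α ((σ ^ n) ω) * ‖iterOp σ L ω n‖ + B * (C ((σ ^ n) ω) * C₀) :=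
  ContinuousLinearMap.opNorm_comp_le_mul_add wn hα.le hB (by positivity) hLY fun x =>
    (hW x).trans (by rw [mul_assoc]; exact mul_le_mul_of_nonneg_left (hwn x) hC)

lemma SubexpBounded.norm_iterOp (wn : X → ℝ) {α C : Ω → ℝ} {B C₀ : ℝ} (hB : 0 ≤ B)
    (hC₀ : 0 ≤ C₀) (hwn : ∀ x, wn x ≤ C₀ * ‖x‖) (hα : ∀ n : ℕ, 0 < α ((σ ^ n) ω))
    (hC : ∀ n : ℕ, 0 ≤ C ((σ ^ n) ω))
    (hLY : ∀ (n : ℕ) x, ‖L ((σ ^ n) ω) x‖ ≤ α ((σ ^ n) ω) * ‖x‖ + B * wn x)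
    (hW : ∀ (n : ℕ) x, wn (iterOp σ L ω n x) ≤ C ((σ ^ n) ω) * wn x)
    (hS : ∀ ε > 0, ∃ K, ∀ m n : ℕ, m ≤ n → birkhoffSum σ (fun ω => Real.log (α ω)) n ω -
      birkhoffSum σ (fun ω => Real.log (α ω)) m ω ≤ ε * n + K)
    (hCsub : SubexpBounded fun n => C ((σ ^ n) ω)) :
    SubexpBounded fun n => ‖iterOp σ L ω n‖ := by
  refine SubexpBounded.of_le_exp_sub_mul_add (β := fun n => B * (C ((σ ^ n) ω) * C₀))
    (fun n => ?_) (fun n => by have := hC n; positivity)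
    ((hCsub.mul_const (mul_nonneg hC₀ hB)).mono fun n => le_of_eq (by ring)) hS
  rw [birkhoffSum_succ, add_sub_cancel_left, ← Equiv.Perm.coe_pow, Real.exp_log (hα n)]
  exact norm_iterOp_succ_le wn hB hC₀ hwn n (hα n) (hC n) (hLY n) (hW n)

end iterOp

theorem stmt4_general {Ω X : Type*} [MeasurableSpace Ω] (ℙ : Measure Ω) [IsProbabilityMeasure ℙ]
    (σ : Equiv.Perm Ω) (herg : Ergodic (⇑σ) ℙ)
    [NormedAddCommGroup X] [NormedSpace ℝ X]
    -- the weak norm `|·| = wn` on `X`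
    (wn : X → ℝ)
    (C₀ : ℝ) (hC₀ : 0 < C₀) (hwn_le : ∀ x : X, wn x ≤ C₀ * ‖x‖)
    -- the family of operators, strongly measurable and bounded for both norms
    (L : ℕ → Ω → X →L[ℝ] X)
    -- Hypothesis (H1)
    (B : ℝ) (hB : 0 < B)
    (α : Ω → ℝ) (hαmeas : Measurable α) (hαpos : ∀ ω, 0 < α ω)
    (hαint : Integrable (fun ω => Real.log (α ω)) ℙ)
    (hαneg : (∫ ω, Real.log (α ω) ∂ℙ) < 0)
    (hLY : ∀ k : ℕ, ∀ᵐ ω ∂ℙ, ∀ f : X, ‖L k ω f‖ ≤ α ω * ‖f‖ + B * wn f)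
    -- Hypothesis (H2)
    (C : Ω → ℝ) (hCpos : ∀ ω, 0 ≤ C ω) (hCtemp : Tempered ℙ σ C)
    (hC : ∀ᵐ ω ∂ℙ, ∀ (k n : ℕ) (f : X),
      wn (iterOp σ (L k) ((σ ^ (-(n : ℤ))) ω) n f) ≤ C ω * wn f)
    -- `X` is (identified with) a linear subspace of `L¹([0,1], Leb)`
    (μ : Measure ℝ)
    (ι : X →ₗ[ℝ] Lp ℝ 1 μ)
    (C₁ : ℝ) (hC₁ : 0 < C₁) (hι_le : ∀ f : X, ‖ι f‖ ≤ C₁ * ‖f‖)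
    -- each `𝓛_{k,ω}` preserves the cone of nonnegative functions and the integral
    (hint : ∀ k : ℕ, ∀ᵐ ω ∂ℙ, ∀ f : X,
      (∫ x, (ι (L k ω f) : Lp ℝ 1 μ) x ∂μ) = ∫ x, (ι f : Lp ℝ 1 μ) x ∂μ) :
    ∀ k : ℕ, ∀ f : X, (∫ x, (ι f : Lp ℝ 1 μ) x ∂μ) ≠ 0 →
      (∀ᵐ ω ∂ℙ, Tendsto
        (fun n : ℕ => (1 / (n : ℝ)) * Real.log ‖iterOp σ (L k) ω n f‖) atTop (nhds 0)) ∧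
      (∀ᵐ ω ∂ℙ, Tendsto
        (fun n : ℕ => (1 / (n : ℝ)) * Real.log ‖iterOp σ (L k) ω n‖) atTop (nhds 0)) := by
  intro k f hf
  have hT : MeasurePreserving σ ℙ ℙ := herg.toMeasurePreserving
  suffices h : ∀ᵐ ω ∂ℙ,
      Tendsto (fun n : ℕ => (1 / (n : ℝ)) * Real.log ‖iterOp σ (L k) ω n f‖) atTop (nhds 0) ∧
      Tendsto (fun n : ℕ => (1 / (n : ℝ)) * Real.log ‖iterOp σ (L k) ω n‖) atTop (nhds 0) from
    ⟨h.mono fun _ h => h.1, h.mono fun _ h => h.2⟩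
  filter_upwards [hT.ae_forall_iterate (hLY k), hT.ae_forall_iterate hC,
    hT.ae_forall_iterate (hint k), hCtemp.ae_tendsto_log_div,
    herg.ae_birkhoffSum_sub_birkhoffSum_le hαmeas.log hαint hαneg.le]
    with ω hLYω hCω hintω hCtempω hSω
  have hW : ∀ (n : ℕ) x, wn (iterOp σ (L k) ω n x) ≤ C ((σ ^ n) ω) * wn x := fun n x => by
    simpa [← Equiv.Perm.coe_pow] using hCω n k n x
  have hop : SubexpBounded fun n => ‖iterOp σ (L k) ω n‖ :=
    .norm_iterOp wn hB.le hC₀.le hwn_le (fun _ => hαpos _) (fun _ => hCpos _) hLYω hW hSω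
      ((SubexpBounded.of_tendsto_log_div hCtempω).mono fun _ => le_abs_self _)
  have hc : 0 < |∫ x, (ι f : Lp ℝ 1 μ) x ∂μ| / C₁ := div_pos (abs_pos.2 hf) hC₁
  have hlow : ∀ n, |∫ x, (ι f : Lp ℝ 1 μ) x ∂μ| / C₁ ≤ ‖iterOp σ (L k) ω n f‖ := fun n => by
    rw [div_le_iff₀' hC₁, ← apply_iterOp_of_forall_apply_eq
      (Φ := fun g => ∫ x, (ι g : Lp ℝ 1 μ) x ∂μ) hintω n f, ← Real.norm_eq_abs,
      ← L1.integral_eq_integral]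
    exact (L1.norm_integral_le _).trans (hι_le _)
  have hf0 : 0 < ‖f‖ := hc.trans_le (hlow 0)
  refine ⟨((hop.mul_const (norm_nonneg f)).mono fun n => (iterOp σ (L k) ω n).le_opNorm f
    ).tendsto_log_div hc hlow, hop.tendsto_log_div (div_pos hc hf0) fun n => ?_⟩
  rw [div_le_iff₀ hf0]
  exact (hlow n).trans ((iterOp σ (L k) ω n).le_opNorm f)

/-- Under (H1), (H2), assuming moreover that `X` embeds in
`L¹([0,1], Leb)` (via an injective linear map `ι` with `‖ι f‖_{L¹} ≤ C₁ ‖f‖`), and that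
each `𝓛_{k,ω}` preserves nonnegativity and integrals, then for each `k` and each `f ∈ X`
with `∫ f dm ≠ 0`, a.e. `(1/n) log ‖𝓛_{k,ω}^{(n)} f‖ → 0`, and consequently a.e.
`(1/n) log ‖𝓛_{k,ω}^{(n)}‖ → 0`. -/
theorem stmt4 {Ω X : Type*} [MeasurableSpace Ω] (ℙ : Measure Ω) [IsProbabilityMeasure ℙ]
    (σ : Equiv.Perm Ω) (hσ : Measurable (⇑σ)) (hσinv : Measurable (⇑σ.symm))
    (herg : Ergodic (⇑σ) ℙ)
    [NormedAddCommGroup X] [NormedSpace ℝ X] [TopologicalSpace.SeparableSpace X]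
    -- the weak norm `|·| = wn` on `X`
    (wn : X → ℝ)
    (wn_nonneg : ∀ x, 0 ≤ wn x)
    (wn_add : ∀ x y, wn (x + y) ≤ wn x + wn y)
    (wn_smul : ∀ (c : ℝ) (x : X), wn (c • x) = |c| * wn x)
    (wn_def : ∀ x, wn x = 0 → x = 0)
    (C₀ : ℝ) (hC₀ : 0 < C₀) (hwn_le : ∀ x : X, wn x ≤ C₀ * ‖x‖)
    -- the family of operators, strongly measurable and bounded for both norms
    (L : ℕ → Ω → X →L[ℝ] X)
    (hLmeas : ∀ (k : ℕ) (f : X), StronglyMeasurable fun ω => L k ω f)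
    (hLwb : ∀ (k : ℕ) (ω : Ω), ∃ c : ℝ, ∀ f : X, wn (L k ω f) ≤ c * wn f)
    -- Hypothesis (H1)
    (B : ℝ) (hB : 0 < B)
    (α : Ω → ℝ) (hαmeas : Measurable α) (hαpos : ∀ ω, 0 < α ω)
    (hαint : Integrable (fun ω => Real.log (α ω)) ℙ)
    (hαneg : (∫ ω, Real.log (α ω) ∂ℙ) < 0)
    (hLY : ∀ k : ℕ, ∀ᵐ ω ∂ℙ, ∀ f : X, ‖L k ω f‖ ≤ α ω * ‖f‖ + B * wn f)
    -- Hypothesis (H2)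
    (C : Ω → ℝ) (hCpos : ∀ ω, 0 ≤ C ω) (hCtemp : Tempered ℙ σ C)
    (hC : ∀ᵐ ω ∂ℙ, ∀ (k n : ℕ) (f : X),
      wn (iterOp σ (L k) ((σ ^ (-(n : ℤ))) ω) n f) ≤ C ω * wn f)
    -- `X` is (identified with) a linear subspace of `L¹([0,1], Leb)`
    (μ : Measure ℝ) (hμ : μ = volume.restrict (Set.Icc (0 : ℝ) 1))
    (ι : X →ₗ[ℝ] Lp ℝ 1 μ) (hι_inj : Function.Injective ι)
    (C₁ : ℝ) (hC₁ : 0 < C₁) (hι_le : ∀ f : X, ‖ι f‖ ≤ C₁ * ‖f‖)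
    -- each `𝓛_{k,ω}` preserves the cone of nonnegative functions and the integral
    (hpos : ∀ k : ℕ, ∀ᵐ ω ∂ℙ, ∀ f : X, 0 ≤ ι f → 0 ≤ ι (L k ω f))
    (hint : ∀ k : ℕ, ∀ᵐ ω ∂ℙ, ∀ f : X,
      (∫ x, (ι (L k ω f) : Lp ℝ 1 μ) x ∂μ) = ∫ x, (ι f : Lp ℝ 1 μ) x ∂μ) :
    ∀ k : ℕ, ∀ f : X, (∫ x, (ι f : Lp ℝ 1 μ) x ∂μ) ≠ 0 →
      (∀ᵐ ω ∂ℙ, Tendsto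
        (fun n : ℕ => (1 / (n : ℝ)) * Real.log ‖iterOp σ (L k) ω n f‖) atTop (nhds 0)) ∧
      (∀ᵐ ω ∂ℙ, Tendsto
        (fun n : ℕ => (1 / (n : ℝ)) * Real.log ‖iterOp σ (L k) ω n‖) atTop (nhds 0)) :=
  stmt4_general ℙ σ herg wn C₀ hC₀ hwn_le L B hB α hαmeas hαpos hαint hαneg hLY C hCpos hCtemp hC μ
    ι C₁ hC₁ hι_le hint
end

section
/- For every k ≥ 1, every r ≥ 1/(2k), every locally integrable f: ℝ → ℝ, and every x ∈ ℝ, one has ∫_{−1}^{1} |E_k f(x+ry) − f(x)| dy ≤ 3 ∫_{−1}^{1} |f(x+(r+1/k)y) − f(x)| dy. -/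
open MeasureTheory
open scoped ENNReal

/-- The conditional expectation `E_k` with respect to the partition of `ℝ` into the
intervals `[j/k, (j+1)/k)`, `j ∈ ℤ`. -/
noncomputable def Ek (k : ℕ) (f : ℝ → ℝ) (x : ℝ) : ℝ :=
  (k : ℝ) * ∫ s in Set.Ico ((⌊x * k⌋ : ℝ) / k) (((⌊x * k⌋ : ℝ) + 1) / k), f s

/-!
Since `E_k f(t)` is the average of `f` over the cell of `t`, `|E_k f(t) - f x|` is at most `k`
times the integral of `|f - f x|` over that cell. After exchanging the order of integration,
a point `s` is counted with weight `k` times the measure of the set of `y ∈ [-1, 1]` for which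
`x + r y` lies in the cell of `s`: an interval of length `1 / (k r)`, empty unless
`|s - x| ≤ c := r + 1/k`. The left side is therefore at most `(1/r) ∫_{x-c}^{x+c} |f - f x|`,
which the substitution `s = x + c y` turns into `c/r` times the right-hand integral, and
`c / r = 1 + 1/(k r) ≤ 3` because `r ≥ 1/(2k)`.
-/

open Set

theorem mem_Ico_div_iff_floor_mul_eq {K : Type*} [Field K] [LinearOrder K] [IsStrictOrderedRing K]
    [FloorRing K] {k : K} (hk : 0 < k) (m : ℤ) (s : K) :
    s ∈ Ico ((m : K) / k) (((m : K) + 1) / k) ↔ ⌊s * k⌋ = m := by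
  rw [mem_Ico, Int.floor_eq_iff, div_le_iff₀ hk, lt_div_iff₀ hk]

theorem abs_sub_lt_inv_of_floor_mul_eq {K : Type*} [Field K] [LinearOrder K]
    [IsStrictOrderedRing K] [FloorRing K] {k a b : K} (hk : 0 < k) (h : ⌊a * k⌋ = ⌊b * k⌋) :
    |a - b| < 1 / k := by
  have := Int.abs_sub_lt_one_of_floor_eq_floor h
  rwa [← sub_mul, abs_mul, abs_of_pos hk, ← lt_div_iff₀ hk] at this

theorem ofReal_abs_setIntegral_sub_le {α : Type*} [MeasurableSpace α] {μ : Measure α}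
    {s : Set α} {f : α → ℝ} (hs : μ s ≠ ∞) (hf : IntegrableOn f s μ) (v : ℝ) :
    ENNReal.ofReal |(∫ x in s, f x ∂μ) - μ.real s * v| ≤
      ∫⁻ x in s, ENNReal.ofReal |f x - v| ∂μ := by
  have hv : IntegrableOn (fun _ => v) s μ := integrableOn_const hs
  rw [← smul_eq_mul, ← setIntegral_const, ← integral_sub hf hv, ← Real.enorm_eq_ofReal_abs]
  simpa only [Real.enorm_eq_ofReal_abs] using enorm_integral_le_lintegral_enorm (fun x => f x - v)

theorem ofReal_abs_Ek_sub_le {k : ℕ} (hk : 0 < k) {f : ℝ → ℝ} (hf : LocallyIntegrable f)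
    (t v : ℝ) :
    ENNReal.ofReal |Ek k f t - v| ≤
      ENNReal.ofReal k * ∫⁻ s in {s : ℝ | ⌊s * k⌋ = ⌊t * k⌋}, ENNReal.ofReal |f s - v| := by
  have hk' : (0 : ℝ) < k := by exact_mod_cast hk
  set I := Ico ((⌊t * k⌋ : ℝ) / k) (((⌊t * k⌋ : ℝ) + 1) / k)
  have hI : {s : ℝ | ⌊s * k⌋ = ⌊t * k⌋} = I :=
    ext fun s => (mem_Ico_div_iff_floor_mul_eq hk' _ s).symm
  have hvol : volume.real I = 1 / k := by
    rw [Real.volume_real_Ico_of_le (by gcongr; simp)]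
    ring
  have hint : IntegrableOn f I :=
    (hf.integrableOn_isCompact isCompact_Icc).mono_set Ico_subset_Icc_self
  have hEk : Ek k f t - v = k * ((∫ s in I, f s) - volume.real I * v) := by
    rw [hvol, mul_sub, ← mul_assoc, mul_one_div_cancel hk'.ne', one_mul]
    rfl
  rw [hI, hEk, abs_mul, ENNReal.ofReal_mul (by positivity), abs_of_pos hk']
  gcongr
  exact ofReal_abs_setIntegral_sub_le (by simp [I]) hint v

section Averaging

variable {k r : ℝ} (hk : 0 < k) (hr : 0 < r) (x : ℝ)
include hk hr

theorem volume_floor_mul_eq_inter_Icc_le (s : ℝ) :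
    volume ({y | ⌊s * k⌋ = ⌊(x + r * y) * k⌋} ∩ Icc (-1) 1) ≤
      (Icc (x - (r + 1 / k)) (x + (r + 1 / k))).indicator
        (fun _ => ENNReal.ofReal (1 / (k * r))) s := by
  by_cases hs : s ∈ Icc (x - (r + 1 / k)) (x + (r + 1 / k))
  · rw [indicator_of_mem hs]
    set m := ⌊s * k⌋
    have hsub : {y | m = ⌊(x + r * y) * k⌋} ∩ Icc (-1) 1 ⊆
        Ico ((m / k - x) / r) (((m + 1) / k - x) / r) := by
      rintro y ⟨hy, -⟩
      obtain ⟨h1, h2⟩ := (mem_Ico_div_iff_floor_mul_eq hk m _).mpr hy.symm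
      constructor
      · rw [div_le_iff₀ hr]; linarith
      · rw [lt_div_iff₀ hr]; linarith
    refine (measure_mono hsub).trans_eq ?_
    rw [Real.volume_Ico]
    congr 1
    field_simp
    ring
  · rw [indicator_of_notMem hs, nonpos_iff_eq_zero, measure_eq_zero_iff_ae_notMem]
    refine Filter.Eventually.of_forall fun y ⟨hy, hy1, hy2⟩ => hs ?_
    have := abs_sub_lt_inv_of_floor_mul_eq hk hy.symm
    rw [abs_lt] at this
    constructor <;> nlinarith

theorem lintegral_Icc_lintegral_floor_mul_eq_le {g : ℝ → ℝ≥0∞} (hg : AEMeasurable g) :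
    ∫⁻ y in Icc (-1 : ℝ) 1, ∫⁻ s in {s | ⌊s * k⌋ = ⌊(x + r * y) * k⌋}, g s ≤
      ENNReal.ofReal (1 / (k * r)) * ∫⁻ s in Icc (x - (r + 1 / k)) (x + (r + 1 / k)), g s := by
  set S : Set (ℝ × ℝ) := {p | ⌊p.2 * k⌋ = ⌊(x + r * p.1) * k⌋}
  have hS : MeasurableSet S := measurableSet_eq_fun (by fun_prop) (by fun_prop)
  have hslice (s : ℝ) : MeasurableSet {y | ⌊s * k⌋ = ⌊(x + r * y) * k⌋} :=
    measurableSet_eq_fun measurable_const (by fun_prop)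
  calc ∫⁻ y in Icc (-1 : ℝ) 1, ∫⁻ s in {s | ⌊s * k⌋ = ⌊(x + r * y) * k⌋}, g s
      = ∫⁻ y in Icc (-1 : ℝ) 1, ∫⁻ s, S.indicator (fun p => g p.2) (y, s) := by
        refine lintegral_congr fun y => ?_
        rw [← lintegral_indicator (measurableSet_eq_fun (by fun_prop) measurable_const)]
        rfl
    _ = ∫⁻ s, ∫⁻ y in Icc (-1 : ℝ) 1, S.indicator (fun p => g p.2) (y, s) :=
        lintegral_lintegral_swap (hg.comp_snd.indicator hS)
    _ = ∫⁻ s, g s * volume ({y | ⌊s * k⌋ = ⌊(x + r * y) * k⌋} ∩ Icc (-1) 1) := by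
        refine lintegral_congr fun s => ?_
        rw [← Measure.restrict_apply (hslice s), ← lintegral_indicator_const (hslice s)]
        rfl
    _ ≤ ∫⁻ s, g s * (Icc (x - (r + 1 / k)) (x + (r + 1 / k))).indicator
          (fun _ => ENNReal.ofReal (1 / (k * r))) s := by
        gcongr with s
        exact volume_floor_mul_eq_inter_Icc_le hk hr x s
    _ = ENNReal.ofReal (1 / (k * r)) * ∫⁻ s in Icc (x - (r + 1 / k)) (x + (r + 1 / k)), g s := by
        simp_rw [← indicator_mul_right, mul_comm (g _)]
        rw [lintegral_indicator measurableSet_Icc, lintegral_const_mul' _ _ ENNReal.ofReal_ne_top]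

end Averaging

theorem lintegral_Icc_eq_ofReal_mul_lintegral_Icc_comp {c : ℝ} (hc : 0 < c) (x : ℝ)
    (g : ℝ → ℝ≥0∞) :
    ∫⁻ s in Icc (x - c) (x + c), g s = ENNReal.ofReal c * ∫⁻ y in Icc (-1 : ℝ) 1, g (x + c * y) := by
  have himage : (c * · + x) '' Icc (-1) 1 = Icc (x - c) (x + c) := by
    rw [image_affine_Icc' hc]
    congr 1 <;> ring
  have hderiv (y : ℝ) : HasDerivAt (c * · + x) c y := by
    simpa using ((hasDerivAt_id' y).const_mul c).add_const x
  rw [← himage, lintegral_image_eq_lintegral_abs_deriv_mul measurableSet_Icc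
    (fun y _ => (hderiv y).hasDerivWithinAt)
    ((add_left_injective x).comp (mul_right_injective₀ hc.ne')).injOn,
    abs_of_pos hc, lintegral_const_mul' _ _ ENNReal.ofReal_ne_top]
  simp only [add_comm]

/-- For every `k ≥ 1`, `r ≥ 1/(2k)`, locally integrable `f` and every
`x`, `∫_{−1}^{1} |E_k f(x+ry) − f(x)| dy ≤ 3 ∫_{−1}^{1} |f(x+(r+1/k)y) − f(x)| dy`. -/
theorem stmt12 (k : ℕ) (hk : 1 ≤ k) (r : ℝ) (hr : 1 / (2 * (k : ℝ)) ≤ r)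
    (f : ℝ → ℝ) (hf : LocallyIntegrable f volume) (x : ℝ) :
    (∫⁻ y in Set.Icc (-1 : ℝ) 1, ENNReal.ofReal |Ek k f (x + r * y) - f x|)
      ≤ 3 * ∫⁻ y in Set.Icc (-1 : ℝ) 1,
          ENNReal.ofReal |f (x + (r + 1 / (k : ℝ)) * y) - f x| := by
  have hk₀ : (0 : ℝ) < k := by exact_mod_cast hk
  have hr₀ : 0 < r := lt_of_lt_of_le (by positivity) hr
  set c := r + 1 / (k : ℝ)
  set g : ℝ → ℝ≥0∞ := fun s => ENNReal.ofReal |f s - f x|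
  have hg : AEMeasurable g := (hf.aestronglyMeasurable.aemeasurable.sub_const _).abs.ennreal_ofReal
  have hconst : ENNReal.ofReal k * ENNReal.ofReal (1 / (k * r)) * ENNReal.ofReal c ≤ 3 := by
    rw [← ENNReal.ofReal_mul hk₀.le, ← ENNReal.ofReal_mul (by positivity),
      ← ENNReal.ofReal_ofNat 3]
    refine ENNReal.ofReal_le_ofReal ?_
    rw [div_le_iff₀ (by positivity)] at hr
    have hcr : (k : ℝ) * (1 / (k * r)) * c = 1 + 1 / (k * r) := by
      simp only [c]
      field_simp
    rw [hcr, ← le_sub_iff_add_le', div_le_iff₀ (by positivity)]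
    linarith
  calc (∫⁻ y in Icc (-1 : ℝ) 1, ENNReal.ofReal |Ek k f (x + r * y) - f x|)
      ≤ ∫⁻ y in Icc (-1 : ℝ) 1,
          ENNReal.ofReal k * ∫⁻ s in {s : ℝ | ⌊s * k⌋ = ⌊(x + r * y) * k⌋}, g s :=
        lintegral_mono fun y => ofReal_abs_Ek_sub_le hk hf _ _
    _ = ENNReal.ofReal k *
          ∫⁻ y in Icc (-1 : ℝ) 1, ∫⁻ s in {s : ℝ | ⌊s * k⌋ = ⌊(x + r * y) * k⌋}, g s :=
        lintegral_const_mul' _ _ ENNReal.ofReal_ne_top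
    _ ≤ ENNReal.ofReal k * (ENNReal.ofReal (1 / (k * r)) * ∫⁻ s in Icc (x - c) (x + c), g s) := by
        gcongr
        exact lintegral_Icc_lintegral_floor_mul_eq_le hk₀ hr₀ x hg
    _ = ENNReal.ofReal k * ENNReal.ofReal (1 / (k * r)) * ENNReal.ofReal c *
          ∫⁻ y in Icc (-1 : ℝ) 1, g (x + c * y) := by
        rw [lintegral_Icc_eq_ofReal_mul_lintegral_Icc_comp (by positivity)]
        ring
    _ ≤ 3 * ∫⁻ y in Icc (-1 : ℝ) 1, g (x + c * y) := by gcongr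
end
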